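/- If X ∼ χ²_d (chi-square with d degrees of freedom), then for every γ > 0, P(X − d ≥ 2√(dγ) + 2γ) ≤ exp(−γ). -/

import Mathlib

open MeasureTheory ProbabilityTheory Real

lemma lm_pdf_mul (l x : ℝ) :
    gaussianPDFReal 0 1 x * rexp (l * x ^ 2)
      = (Real.sqrt (2 * π))⁻¹ * rexp (-(1/2 - l) * x ^ 2) := by
  simp only [gaussianPDFReal, NNReal.coe_one, mul_one, sub_zero]
  rw [mul_assoc, ← Real.exp_add]
  ring_nf

lemma lm_gauss_integral {l : ℝ} (hl : l < 1/2) :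
    Integrable (fun x => rexp (l * x ^ 2)) (gaussianReal 0 1) ∧
    ∫ x, rexp (l * x ^ 2) ∂(gaussianReal 0 1) = Real.sqrt (1 - 2 * l)⁻¹ := by
  have hb : 0 < 1/2 - l := by linarith
  have hmeas := (measurable_gaussianPDFReal 0 1).real_toNNReal
  have hgr : gaussianReal 0 1 = volume.withDensity
      (fun x => ((gaussianPDFReal 0 1 x).toNNReal : ENNReal)) := by
    rw [gaussianReal_of_var_ne_zero 0 one_ne_zero]; rfl
  have hfun : (fun x => (gaussianPDFReal 0 1 x).toNNReal • rexp (l * x ^ 2))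
      = fun x => (Real.sqrt (2*π))⁻¹ * rexp (-(1/2 - l) * x ^ 2) := by
    funext x
    rw [NNReal.smul_def, Real.coe_toNNReal _ (gaussianPDFReal_nonneg 0 1 x)]
    exact lm_pdf_mul l x
  constructor
  · rw [hgr, integrable_withDensity_iff_integrable_smul hmeas, hfun]
    exact (integrable_exp_neg_mul_sq hb).const_mul _
  · rw [hgr, integral_withDensity_eq_integral_smul hmeas, hfun,
      integral_const_mul, integral_gaussian]
    rw [← Real.sqrt_inv, ← Real.sqrt_mul (by positivity)]
    congr 1
    have hπ : (0:ℝ) < π := Real.pi_pos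
    have h2 : (1:ℝ) - 2 * l ≠ 0 := by linarith
    field_simp

lemma lm_analytic (d : ℕ) (hd : 0 < d) (γ : ℝ) (hγ : 0 < γ) :
    rexp (-((2 * Real.sqrt (d * γ) + 2 * γ) / 2)) *
      (Real.sqrt (1 + (2 * Real.sqrt (d * γ) + 2 * γ) / d)) ^ d ≤ rexp (-γ) := by
  have hd' : (0:ℝ) < d := Nat.cast_pos.mpr hd
  set a := Real.sqrt (γ / d) with ha
  have ha0 : 0 ≤ a := Real.sqrt_nonneg _
  have ha2 : a ^ 2 = γ / d := Real.sq_sqrt (by positivity)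
  have hsd : Real.sqrt (d * γ) = d * a := by
    rw [ha, show (d:ℝ) * γ = d^2 * (γ / d) by field_simp, Real.sqrt_mul (by positivity),
      Real.sqrt_sq hd'.le]
  have hγa : γ = d * a ^ 2 := by rw [ha2]; field_simp
  have htd : (2 * Real.sqrt (d * γ) + 2 * γ) / d = 2 * a + 2 * a ^ 2 := by
    rw [hsd, hγa]; field_simp
  have hkey : 1 + 2 * a + 2 * a ^ 2 ≤ rexp (2 * a) := by
    have := Real.sum_le_exp_of_nonneg (by linarith : (0:ℝ) ≤ 2 * a) 3
    simp [Finset.sum_range_succ, Nat.factorial] at this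
    nlinarith [this]
  have hsqrt : Real.sqrt (1 + (2 * Real.sqrt (d * γ) + 2 * γ) / d) ≤ rexp a := by
    rw [htd]
    have : (1:ℝ) + (2 * a + 2 * a ^ 2) ≤ (rexp a) ^ 2 := by
      have h2 : (rexp a) ^ 2 = rexp (2 * a) := by
        rw [sq, ← Real.exp_add]; ring_nf
      rw [h2]; linarith
    calc Real.sqrt (1 + (2 * a + 2 * a ^ 2)) ≤ Real.sqrt ((rexp a) ^ 2) :=
          Real.sqrt_le_sqrt this
      _ = rexp a := Real.sqrt_sq (Real.exp_pos a).le
  calc rexp (-((2 * Real.sqrt (d * γ) + 2 * γ) / 2)) *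
        (Real.sqrt (1 + (2 * Real.sqrt (d * γ) + 2 * γ) / d)) ^ d
      ≤ rexp (-((2 * Real.sqrt (d * γ) + 2 * γ) / 2)) * (rexp a) ^ d := by
        gcongr
    _ = rexp (-((2 * Real.sqrt (d * γ) + 2 * γ) / 2) + d * a) := by
        rw [← Real.exp_nat_mul, ← Real.exp_add]
    _ = rexp (-γ) := by
        congr 1
        rw [hsd]; nlinarith [hγa]

theorem laurent_massart_upper_tail
    {Ω : Type*} [MeasurableSpace Ω] (P : Measure Ω) [IsProbabilityMeasure P]
    (d : ℕ) (Z : Fin d → Ω → ℝ) (hmeas : ∀ i, Measurable (Z i))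
    (hindep : iIndepFun Z P)
    (hgauss : ∀ i, Measure.map (Z i) P = gaussianReal 0 1)
    (X : Ω → ℝ) (hX : X = fun ω => ∑ i, (Z i ω) ^ 2)
    (γ : ℝ) (hγ : 0 < γ) :
    P {ω | X ω - d ≥ 2 * Real.sqrt (d * γ) + 2 * γ} ≤ ENNReal.ofReal (Real.exp (-γ)) := by
  rcases Nat.eq_zero_or_pos d with hd0 | hd
  · subst hd0
    have hset : {ω | X ω - ((0:ℕ):ℝ) ≥ 2 * Real.sqrt ((0:ℕ) * γ) + 2 * γ} = ∅ := by
      ext ω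
      have hx0 : X ω = 0 := by rw [hX]; simp
      simp only [Set.mem_setOf_eq, Set.mem_empty_iff_false, iff_false, ge_iff_le, not_le,
        hx0, Nat.cast_zero, zero_mul, Real.sqrt_zero, mul_zero, sub_zero]
      linarith
    rw [hset, measure_empty]
    positivity
  · have hd' : (0:ℝ) < d := by exact_mod_cast hd
    set t := 2 * Real.sqrt ((d:ℝ) * γ) + 2 * γ with htdef
    have hst : 0 ≤ Real.sqrt ((d:ℝ) * γ) := Real.sqrt_nonneg _
    have ht : 0 < t := by rw [htdef]; linarith
    set l := t / (2 * ((d:ℝ) + t)) with hldef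
    have hdt : 0 < (d:ℝ) + t := by linarith
    have hl0 : 0 ≤ l := by positivity
    have hl : l < 1/2 := by
      rw [hldef, div_lt_iff₀ (by linarith)]
      linarith
    have hdne : (d:ℝ) ≠ 0 := hd'.ne'
    have hinv : (1 - 2 * l)⁻¹ = 1 + t / d := by
      have h1 : 1 - 2 * l = (d : ℝ) / ((d:ℝ) + t) := by
        rw [hldef]
        field_simp
        ring
      rw [h1, inv_div, add_div, div_self hdne]
    have hl2 : l * ((d:ℝ) + t) = t / 2 := by
      rw [hldef]
      field_simp
    have hmeas2 : ∀ i, Measurable fun ω => Z i ω ^ 2 := fun i => (hmeas i).pow_const 2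
    have hindep2 : iIndepFun (fun i ω => Z i ω ^ 2) P :=
      hindep.comp (fun _ => fun x : ℝ => x ^ 2) (fun _ => measurable_id.pow_const 2)
    have hint_gauss : Integrable (fun x : ℝ => rexp (l * x ^ 2)) (gaussianReal 0 1) :=
      (lm_gauss_integral hl).1
    have hint_i : ∀ i, Integrable (fun ω => rexp (l * Z i ω ^ 2)) P := by
      intro i
      have h1 : Integrable (fun x : ℝ => rexp (l * x ^ 2)) (Measure.map (Z i) P) := by
        rw [hgauss i]; exact hint_gauss
      exact (integrable_map_measure h1.aestronglyMeasurable (hmeas i).aemeasurable).mp h1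
    have hmgf_i : ∀ i, mgf (fun ω => Z i ω ^ 2) P l = Real.sqrt (1 - 2 * l)⁻¹ := by
      intro i
      have hmm : AEStronglyMeasurable (fun x : ℝ => rexp (l * x ^ 2)) (Measure.map (Z i) P) := by
        rw [hgauss i]; exact hint_gauss.aestronglyMeasurable
      show ∫ ω, rexp (l * Z i ω ^ 2) ∂P = _
      rw [← integral_map (hmeas i).aemeasurable hmm, hgauss i]
      exact (lm_gauss_integral hl).2
    have hXeq : X = ∑ i, fun ω => Z i ω ^ 2 := by
      funext ω; rw [hX]; simp
    have hintX : Integrable (fun ω => rexp (l * X ω)) P := by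
      rw [hXeq]
      exact hindep2.integrable_exp_mul_sum hmeas2 (fun i _ => hint_i i)
    have hmgfX : mgf X P l = (Real.sqrt (1 - 2 * l)⁻¹) ^ d := by
      rw [hXeq, hindep2.mgf_sum hmeas2]
      simp [hmgf_i]
    have hch := measure_ge_le_exp_mul_mgf (X := X) (μ := P) (t := l) ((d:ℝ) + t) hl0 hintX
    have hsub : {ω | X ω - (d:ℝ) ≥ t} = {ω | (d:ℝ) + t ≤ X ω} := by
      ext ω
      simp only [Set.mem_setOf_eq, ge_iff_le]
      constructor <;> intro h <;> linarith
    calc P {ω | X ω - (d:ℝ) ≥ t}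
        = ENNReal.ofReal ((P {ω | X ω - (d:ℝ) ≥ t}).toReal) :=
          (ENNReal.ofReal_toReal (measure_ne_top _ _)).symm
      _ ≤ ENNReal.ofReal (rexp (-l * ((d:ℝ) + t)) * mgf X P l) :=
          ENNReal.ofReal_le_ofReal (by rw [hsub]; exact hch)
      _ ≤ ENNReal.ofReal (rexp (-γ)) := by
          apply ENNReal.ofReal_le_ofReal
          rw [neg_mul, hl2, hmgfX, hinv]
          exact lm_analytic d hd γ hγ
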